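/- arXiv:1501.03640 — 2 statements merged into one kernel-verified Lean document; each statement's English description precedes it below -/
import Mathlib

section
/- Let c > 0 and let μ₁, μ₂ be scaling functions with lim_{n→∞} μ₁(n)/μ₂(n) = c. Then P_{μ₁}(E) = P_{μ₂}(E) for every E ⊆ ℕ. -/
open Filter Topology

/-- `lamMu μ E n`: the analogue of the largest-hole length at infinity, i.e. the supremum
of `μ a - μ b` over `n ≤ a < b` such that no element of `E` lies strictly between `a` and `b`. -/
noncomputable def lamMu (μ : ℕ → ℝ) (E : Set ℕ) (n : ℕ) : ℝ :=
  sSup {d : ℝ | ∃ a b : ℕ, n ≤ a ∧ a < b ∧ (∀ m : ℕ, a < m → m < b → m ∉ E) ∧ d = μ a - μ b}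

/-- The upper porosity of `E` at infinity w.r.t. the scaling function `μ`. -/
noncomputable def upperPorosityInf (μ : ℕ → ℝ) (E : Set ℕ) : ℝ :=
  Filter.limsup (fun n => lamMu μ E n / μ n) Filter.atTop

/-- The lower porosity of `E` at infinity w.r.t. the scaling function `μ`. -/
noncomputable def lowerPorosityInf (μ : ℕ → ℝ) (E : Set ℕ) : ℝ :=
  Filter.liminf (fun n => lamMu μ E n / μ n) Filter.atTop

/-- The set of porosity numbers of `E` at infinity w.r.t. `μ`. -/
def porosityNumbersInf (μ : ℕ → ℝ) (E : Set ℕ) : Set ℝ :=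
  {p : ℝ | ∃ n : ℕ → ℕ, StrictMono n ∧
    Tendsto (fun k => lamMu μ E (n k) / μ (n k)) atTop (nhds p)}

/-! If `μ₁ ~ c μ₂`, then for `n ≤ a < b` the increment `μ₁ a - μ₁ b` equals `c (μ₂ a - μ₂ b)` up to
`o(μ₂ n)`, uniformly in `a, b`. Taking suprema over the holes of `E` beyond `n` gives
`λ_{μ₁}(E, n) = c λ_{μ₂}(E, n) + o(μ₂ n)`, and dividing by `μ₁ n ~ c μ₂ n` shows that the two
normalized hole lengths differ by `o(1)`, so they have the same subsequential limits. -/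

section lamMu

variable {μ ν : ℕ → ℝ} {E : Set ℕ} {n a b : ℕ} {c δ x : ℝ}

lemma bddAbove_lamMu_set (hμ : Antitone μ) (hμ0 : ∀ k, 0 ≤ μ k) :
    BddAbove {d : ℝ | ∃ a b : ℕ, n ≤ a ∧ a < b ∧ (∀ m : ℕ, a < m → m < b → m ∉ E) ∧
      d = μ a - μ b} := by
  refine ⟨μ n, ?_⟩
  rintro _ ⟨a, b, hna, -, -, rfl⟩
  linarith [hμ hna, hμ0 b]

lemma sub_le_lamMu (hμ : Antitone μ) (hμ0 : ∀ k, 0 ≤ μ k) (hna : n ≤ a) (hab : a < b)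
    (hgap : ∀ m, a < m → m < b → m ∉ E) : μ a - μ b ≤ lamMu μ E n :=
  le_csSup (bddAbove_lamMu_set hμ hμ0) ⟨a, b, hna, hab, hgap, rfl⟩

lemma lamMu_le_of_forall
    (h : ∀ a b, n ≤ a → a < b → (∀ m, a < m → m < b → m ∉ E) → μ a - μ b ≤ x) :
    lamMu μ E n ≤ x :=
  csSup_le ⟨_, n, n + 1, le_rfl, n.lt_succ_self, fun _ _ _ => by omega, rfl⟩
    fun _ ⟨a, b, hna, hab, hgap, hd⟩ => hd ▸ h a b hna hab hgap

lemma lamMu_nonneg (hμ : Antitone μ) (hμ0 : ∀ k, 0 ≤ μ k) : 0 ≤ lamMu μ E n :=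
  (sub_nonneg.2 (hμ n.le_succ)).trans
    (sub_le_lamMu hμ hμ0 le_rfl n.lt_succ_self fun _ _ _ => by omega)

lemma lamMu_le (hμ : Antitone μ) (hμ0 : ∀ k, 0 ≤ μ k) : lamMu μ E n ≤ μ n :=
  lamMu_le_of_forall fun _ b hna _ _ => by linarith [hμ hna, hμ0 b]

lemma lamMu_le_mul_add (hν : Antitone ν) (hν0 : ∀ k, 0 ≤ ν k) (hc : 0 ≤ c)
    (h : ∀ a b, n ≤ a → a < b → μ a - μ b ≤ c * (ν a - ν b) + δ) :
    lamMu μ E n ≤ c * lamMu ν E n + δ :=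
  lamMu_le_of_forall fun a b hna hab hgap =>
    (h a b hna hab).trans (by gcongr; exact sub_le_lamMu hν hν0 hna hab hgap)

lemma abs_lamMu_sub_mul_le (hμ : Antitone μ) (hμ0 : ∀ k, 0 ≤ μ k) (hν : Antitone ν)
    (hν0 : ∀ k, 0 ≤ ν k) (hc : 0 < c)
    (h : ∀ a b, n ≤ a → a < b → |μ a - μ b - c * (ν a - ν b)| ≤ δ) :
    |lamMu μ E n - c * lamMu ν E n| ≤ δ := by
  refine abs_sub_le_iff.2 ⟨?_, ?_⟩
  · have := lamMu_le_mul_add (μ := μ) (E := E) (δ := δ) hν hν0 hc.le fun a b hna hab => by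
      linarith [(abs_le.1 (h a b hna hab)).2]
    linarith
  · have hle := lamMu_le_mul_add (μ := ν) (E := E) (c := c⁻¹) (δ := δ / c) hμ hμ0
      (inv_nonneg.2 hc.le) fun a b hna hab => by
        rw [inv_mul_eq_div, ← add_div, le_div_iff₀ hc]
        linarith [(abs_le.1 (h a b hna hab)).1]
    have : c * lamMu ν E n ≤ lamMu μ E n + δ := calc
      c * lamMu ν E n ≤ c * (c⁻¹ * lamMu μ E n + δ / c) := by gcongr
      _ = lamMu μ E n + δ := by field_simp
    linarith

end lamMu

section ratio

variable {μ ν : ℕ → ℝ} {E : Set ℕ} {c : ℝ}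

lemma tendsto_lamMu_sub_mul_lamMu_div (hμ : Antitone μ) (hμ0 : ∀ k, 0 ≤ μ k) (hν : Antitone ν)
    (hνpos : ∀ k, 0 < ν k) (hc : 0 < c) (hratio : Tendsto (fun n => μ n / ν n) atTop (𝓝 c)) :
    Tendsto (fun n => (lamMu μ E n - c * lamMu ν E n) / ν n) atTop (𝓝 0) := by
  rw [Metric.tendsto_atTop]
  intro ε hε
  obtain ⟨N, hN⟩ := Metric.tendsto_atTop.1 hratio (ε / 4) (by positivity)
  have hpoint : ∀ k, N ≤ k → |μ k - c * ν k| ≤ ε / 4 * ν k := fun k hk => by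
    have e : μ k - c * ν k = (μ k / ν k - c) * ν k := by field_simp [(hνpos k).ne']
    rw [e, abs_mul, abs_of_pos (hνpos k), ← Real.dist_eq]
    exact mul_le_mul_of_nonneg_right (hN k hk).le (hνpos k).le
  refine ⟨N, fun n hn => ?_⟩
  have hpair : ∀ a b, n ≤ a → a < b → |μ a - μ b - c * (ν a - ν b)| ≤ ε / 2 * ν n :=
    fun a b hna hab => calc
      |μ a - μ b - c * (ν a - ν b)| = |(μ a - c * ν a) - (μ b - c * ν b)| := by
        congr 1; ring
      _ ≤ |μ a - c * ν a| + |μ b - c * ν b| := abs_sub _ _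
      _ ≤ ε / 4 * ν a + ε / 4 * ν b :=
        add_le_add (hpoint a (hn.trans hna)) (hpoint b (hn.trans (hna.trans hab.le)))
      _ ≤ ε / 4 * ν n + ε / 4 * ν n := by gcongr <;> apply hν <;> omega
      _ = ε / 2 * ν n := by ring
  have hlam := abs_lamMu_sub_mul_le (E := E) hμ hμ0 hν (fun k => (hνpos k).le) hc hpair
  rw [Real.dist_eq, sub_zero, abs_div, abs_of_pos (hνpos n), div_lt_iff₀ (hνpos n)]
  linarith [mul_pos hε (hνpos n)]

lemma tendsto_lamMu_div_sub_lamMu_div (hμ : Antitone μ) (hμpos : ∀ k, 0 < μ k)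
    (hν : Antitone ν) (hνpos : ∀ k, 0 < ν k) (hc : 0 < c)
    (hratio : Tendsto (fun n => μ n / ν n) atTop (𝓝 c)) :
    Tendsto (fun n => lamMu μ E n / μ n - lamMu ν E n / ν n) atTop (𝓝 0) := by
  have hbdd : IsBoundedUnder (· ≤ ·) atTop (norm ∘ fun n => lamMu ν E n / ν n) :=
    isBoundedUnder_of ⟨1, fun n => by
      have hν0 : ∀ k, 0 ≤ ν k := fun k => (hνpos k).le
      rw [Function.comp_apply, Real.norm_eq_abs,
        abs_of_nonneg (div_nonneg (lamMu_nonneg hν hν0) (hν0 n))]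
      exact (div_le_one (hνpos n)).2 (lamMu_le hν hν0)⟩
  -- `(λ_μ/μ - λ_ν/ν) · (μ/ν)`, split into two summands that visibly tend to `0`
  have hnum : Tendsto (fun n => (lamMu μ E n - c * lamMu ν E n) / ν n +
      lamMu ν E n / ν n * (c - μ n / ν n)) atTop (𝓝 0) := by
    simpa using (tendsto_lamMu_sub_mul_lamMu_div hμ (fun k => (hμpos k).le) hν hνpos hc
      hratio).add (isBoundedUnder_le_mul_tendsto_zero hbdd (by
        simpa using (tendsto_const_nhds (x := c)).sub hratio))
  rw [← zero_div c]
  refine (hnum.div hratio hc.ne').congr fun n => ?_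
  rw [Pi.div_apply]
  field_simp [(hμpos n).ne', (hνpos n).ne']
  ring

end ratio

lemma porosityNumbersInf_eq_of_tendsto_sub {μ ν : ℕ → ℝ} {E : Set ℕ}
    (h : Tendsto (fun n => lamMu μ E n / μ n - lamMu ν E n / ν n) atTop (𝓝 0)) :
    porosityNumbersInf μ E = porosityNumbersInf ν E := by
  have hdist : Tendsto (fun n => dist (lamMu μ E n / μ n) (lamMu ν E n / ν n)) atTop (𝓝 0) := by
    simpa [Real.dist_eq] using h.abs
  ext p
  constructor
  · rintro ⟨s, hs, hp⟩
    exact ⟨s, hs, hp.congr_dist (hdist.comp hs.tendsto_atTop)⟩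
  · rintro ⟨s, hs, hp⟩
    refine ⟨s, hs, hp.congr_dist ?_⟩
    simpa only [dist_comm, Function.comp_def] using hdist.comp hs.tendsto_atTop

theorem porosityNumbersInf_eq_of_ratio_tendsto_const_general
    (c : ℝ) (hc : 0 < c) (μ₁ μ₂ : ℕ → ℝ)
    (hμ₁anti : StrictAnti μ₁) (hμ₁pos : ∀ n, 0 < μ₁ n)
    (hμ₂anti : StrictAnti μ₂) (hμ₂pos : ∀ n, 0 < μ₂ n)
    (hratio : Tendsto (fun n => μ₁ n / μ₂ n) atTop (nhds c))
    (E : Set ℕ) :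
    porosityNumbersInf μ₁ E = porosityNumbersInf μ₂ E :=
  porosityNumbersInf_eq_of_tendsto_sub <|
    tendsto_lamMu_div_sub_lamMu_div hμ₁anti.antitone hμ₁pos hμ₂anti.antitone hμ₂pos hc hratio

theorem porosityNumbersInf_eq_of_ratio_tendsto_const
    (c : ℝ) (hc : 0 < c) (μ₁ μ₂ : ℕ → ℝ)
    (hμ₁anti : StrictAnti μ₁) (hμ₁pos : ∀ n, 0 < μ₁ n) (hμ₁0 : Tendsto μ₁ atTop (nhds 0))
    (hμ₂anti : StrictAnti μ₂) (hμ₂pos : ∀ n, 0 < μ₂ n) (hμ₂0 : Tendsto μ₂ atTop (nhds 0))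
    (hratio : Tendsto (fun n => μ₁ n / μ₂ n) atTop (nhds c))
    (E : Set ℕ) :
    porosityNumbersInf μ₁ E = porosityNumbersInf μ₂ E :=
  porosityNumbersInf_eq_of_ratio_tendsto_const_general c hc μ₁ μ₂ hμ₁anti hμ₁pos hμ₂anti hμ₂pos
    hratio E
end

section
/- Let μ : ℕ → (0,∞) be an eventually concave scaling function. Then the right lower porosity at 0 of the image set μ(ℕ) ⊆ ℝ⁺ satisfies p̲(μ(ℕ)) = p̲_μ(ℕ) / (1 + p̲_μ(ℕ)). -/
open Filter Topology

/-- The length of the largest open subinterval of `(0, h)` containing no point of `E`. -/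
noncomputable def lam (E : Set ℝ) (h : ℝ) : ℝ :=
  sSup {l : ℝ | ∃ a b : ℝ, 0 ≤ a ∧ a ≤ b ∧ b ≤ h ∧ Set.Ioo a b ∩ E = ∅ ∧ l = b - a}

/-- The right lower porosity of `E ⊆ ℝ⁺` at `0`. -/
noncomputable def lowerPorosity (E : Set ℝ) : ℝ :=
  Filter.liminf (fun h => lam E h / h) (nhdsWithin 0 (Set.Ioi 0))

/-!
Eventual concavity makes the gaps `μ k - μ (k + 1)` eventually nonincreasing. Then
`λ_μ(ℕ, k)` is just the `k`-th gap, and for `h ∈ (μ (n + 1), μ n]` the largest hole of `μ(ℕ)`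
in `(0, h)` is either `(μ (n + 1), h)` or the next gap `(μ (n + 2), μ (n + 1))`. So
`λ(μ(ℕ), h) / h ≥ d / (c + d)` with `c = μ (n + 1)` and `d` the next gap, with equality at
`h = c + d`. Since `d / (c + d) = r / (1 + r)` for `r = d / c` and `t ↦ t / (1 + t)` is
continuous and increasing, taking liminfs gives `p̲(μ(ℕ)) = p / (1 + p)` with `p = p̲_μ(ℕ)`.
-/

open Set

variable {μ : ℕ → ℝ}

lemma exists_antitoneOn_sub_succ_of_concave
    (hconc : ∀ᶠ n : ℕ in atTop, μ n ≤ (μ (n - 1) + μ (n + 1)) / 2) :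
    ∃ N, AntitoneOn (fun k => μ k - μ (k + 1)) (Ici N) := by
  obtain ⟨N, hN⟩ := eventually_atTop.1 hconc
  refine ⟨N, antitoneOn_nat_Ici_of_succ_le fun k hk => ?_⟩
  have := hN (k + 1) (by omega)
  simp only [Nat.add_sub_cancel] at this
  linarith

lemma lamMu_univ_eq_sub_succ {n : ℕ} (hgap : AntitoneOn (fun k => μ k - μ (k + 1)) (Ici n)) :
    lamMu μ univ n = μ n - μ (n + 1) := by
  refine IsGreatest.csSup_eq ⟨⟨n, n + 1, le_rfl, n.lt_succ_self, fun m h1 h2 => by omega, rfl⟩, ?_⟩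
  rintro _ ⟨a, b, hna, hab, hE, rfl⟩
  obtain rfl : b = a + 1 := by
    by_contra hne
    exact hE (a + 1) a.lt_succ_self (by omega) (mem_univ _)
  exact hgap (mem_Ici.2 le_rfl) (mem_Ici.2 hna) hna

lemma lowerPorosityInf_univ_eq_liminf {N : ℕ}
    (hgap : AntitoneOn (fun k => μ k - μ (k + 1)) (Ici N)) :
    lowerPorosityInf μ univ = liminf (fun k => (μ k - μ (k + 1)) / μ k) atTop :=
  liminf_congr <| (eventually_ge_atTop N).mono fun n hn => by
    rw [lamMu_univ_eq_sub_succ (hgap.mono (Ici_subset_Ici.2 hn))]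

lemma lam_nonneg (E : Set ℝ) {h : ℝ} (hh : 0 ≤ h) : 0 ≤ lam E h := by
  refine le_csSup ⟨h, ?_⟩ ⟨0, 0, le_rfl, le_rfl, hh, by simp, by ring⟩
  rintro _ ⟨a, b, ha, -, hb, -, rfl⟩
  linarith

lemma lam_le_self (E : Set ℝ) {h : ℝ} (hh : 0 ≤ h) : lam E h ≤ h := by
  refine Real.sSup_le ?_ hh
  rintro _ ⟨a, b, ha, -, hb, -, rfl⟩
  linarith

lemma eventually_lam_div_mem_Icc (E : Set ℝ) :
    ∀ᶠ h in 𝓝[>] (0 : ℝ), lam E h / h ∈ Icc 0 1 := by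
  filter_upwards [self_mem_nhdsWithin] with h (hh : 0 < h)
  exact ⟨div_nonneg (lam_nonneg E hh.le) hh.le, div_le_one_of_le₀ (lam_le_self E hh.le) hh.le⟩

namespace StrictAnti

lemma Ioo_succ_inter_range_eq_empty (hμ : StrictAnti μ) (k : ℕ) :
    Ioo (μ (k + 1)) (μ k) ∩ range μ = ∅ := by
  refine eq_empty_of_forall_notMem ?_
  rintro _ ⟨⟨h1, h2⟩, j, rfl⟩
  have := hμ.lt_iff_gt.1 h1
  have := hμ.lt_iff_gt.1 h2
  omega

lemma exists_mem_Ioc_of_tendsto_zero (hμ : StrictAnti μ) (hμ0 : Tendsto μ atTop (𝓝 0))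
    {h : ℝ} (hh : 0 < h) {K : ℕ} (hK : h ≤ μ K) : ∃ n, K ≤ n ∧ h ∈ Ioc (μ (n + 1)) (μ n) := by
  classical
  have hex : ∃ k, μ k < h := (hμ0.eventually (gt_mem_nhds hh)).exists
  have hKlt : K < Nat.find hex := by
    by_contra! hle
    exact (Nat.find_spec hex).not_ge (hK.trans (hμ.antitone hle))
  obtain ⟨n, hn⟩ : ∃ n, Nat.find hex = n + 1 := ⟨Nat.find hex - 1, by omega⟩
  exact ⟨n, by omega, hn ▸ Nat.find_spec hex, not_lt.1 (Nat.find_min hex (by omega))⟩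

lemma lam_range_eq_max (hμ : StrictAnti μ) (hpos : ∀ n, 0 < μ n) (hμ0 : Tendsto μ atTop (𝓝 0))
    {n : ℕ} (hgap : AntitoneOn (fun k => μ k - μ (k + 1)) (Ici (n + 1)))
    {h : ℝ} (hh : h ∈ Ioc (μ (n + 1)) (μ n)) :
    lam (range μ) h = max (h - μ (n + 1)) (μ (n + 1) - μ (n + 2)) := by
  refine IsGreatest.csSup_eq ⟨?_, ?_⟩
  · rcases le_total (h - μ (n + 1)) (μ (n + 1) - μ (n + 2)) with hle | hle
    · rw [max_eq_right hle]
      exact ⟨μ (n + 2), μ (n + 1), (hpos _).le, (hμ (by omega)).le, hh.1.le,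
        hμ.Ioo_succ_inter_range_eq_empty (n + 1), rfl⟩
    · rw [max_eq_left hle]
      refine ⟨μ (n + 1), h, (hpos _).le, hh.1.le, le_rfl, subset_empty_iff.1 ?_, rfl⟩
      rw [← hμ.Ioo_succ_inter_range_eq_empty n]
      exact inter_subset_inter_left _ (Ioo_subset_Ioo_right hh.2)
  · rintro _ ⟨a, b, ha, hab, hb, hempty, rfl⟩
    rcases hab.eq_or_lt with rfl | hab
    · exact le_max_of_le_left (by linarith [hh.1])
    obtain ⟨m, hnm, hbm⟩ := hμ.exists_mem_Ioc_of_tendsto_zero hμ0 (ha.trans_lt hab) (hb.trans hh.2)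
    have hma : μ (m + 1) ≤ a := by
      by_contra! hlt
      exact (eq_empty_iff_forall_notMem.1 hempty) _ ⟨⟨hlt, hbm.1⟩, m + 1, rfl⟩
    rcases hnm.eq_or_lt with rfl | hnm
    · exact le_max_of_le_left (by linarith)
    · have := hgap (mem_Ici.2 le_rfl) (mem_Ici.2 hnm) hnm
      exact le_max_of_le_right (by linarith [hbm.2])

end StrictAnti

lemma div_add_le_max_sub_div {c d h : ℝ} (hc : 0 < c) (hd : 0 < d) (hch : c < h) :
    d / (c + d) ≤ max (h - c) d / h := by
  have hh : 0 < h := hc.trans hch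
  rcases le_total h (c + d) with hle | hle
  · calc d / (c + d) ≤ d / h := div_le_div_of_nonneg_left hd.le hh hle
      _ ≤ max (h - c) d / h := div_le_div_of_nonneg_right (le_max_right _ _) hh.le
  · calc d / (c + d) ≤ (h - c) / h := by
          rw [div_le_div_iff₀ (by positivity) hh]
          nlinarith
      _ ≤ max (h - c) d / h := div_le_div_of_nonneg_right (le_max_left _ _) hh.le

lemma liminf_div_one_add {ι : Type*} {l : Filter ι} [NeBot l] {x : ι → ℝ} (hx : ∀ i, 0 ≤ x i)
    (hbdd : l.IsBoundedUnder (· ≤ ·) x) :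
    liminf (fun i => x i / (1 + x i)) l = liminf x l / (1 + liminf x l) := by
  -- `t / (1 + t)` is not monotone on all of `ℝ`, so clamp it at `0`.
  set g : ℝ → ℝ := fun t => max t 0 / (1 + max t 0)
  have hg : Monotone g := fun a b hab => by
    have h1 : max a 0 ≤ max b 0 := max_le_max_right 0 hab
    have h2 : 0 ≤ max a 0 := le_max_right _ _
    simp only [g]
    rw [div_le_div_iff₀ (by positivity) (by positivity)]
    nlinarith
  have hgc : Continuous g := (continuous_id.max continuous_const).div
    (continuous_const.add (continuous_id.max continuous_const)) fun t => by positivity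
  have hcob := hbdd.isCoboundedUnder_ge
  have hp : 0 ≤ liminf x l := le_liminf_of_le hcob (Eventually.of_forall hx)
  have := hg.map_liminf_of_continuousAt x hgc.continuousAt hcob (isBoundedUnder_of ⟨0, hx⟩)
  simpa only [g, max_eq_left hp, Function.comp_def, max_eq_left (hx _)] using this.symm

lemma lowerPorosity_range_le_liminf (hμ : StrictAnti μ) (hpos : ∀ n, 0 < μ n)
    (hμ0 : Tendsto μ atTop (𝓝 0)) {N : ℕ}
    (hgap : AntitoneOn (fun k => μ k - μ (k + 1)) (Ici N)) :
    lowerPorosity (range μ) ≤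
      liminf (fun k => (μ k - μ (k + 1)) / (μ k + (μ k - μ (k + 1)))) atTop := by
  set s : ℕ → ℝ := fun k => μ k + (μ k - μ (k + 1))
  have hs : Tendsto s atTop (𝓝[>] 0) := by
    refine tendsto_nhdsWithin_iff.2 ⟨?_, Eventually.of_forall fun k => ?_⟩
    · simpa using hμ0.add (hμ0.sub (hμ0.comp (tendsto_add_atTop_nat 1)))
    · have := hpos k
      have := hμ k.lt_succ_self
      simp only [s, mem_Ioi]
      linarith
  have hf := eventually_lam_div_mem_Icc (range μ)
  have hlam : ∀ᶠ k in atTop,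
      lam (range μ) (s k) / s k = (μ k - μ (k + 1)) / (μ k + (μ k - μ (k + 1))) := by
    filter_upwards [eventually_gt_atTop N] with k hk
    obtain ⟨n, rfl⟩ : ∃ n, k = n + 1 := ⟨k - 1, by omega⟩
    have hsk : s (n + 1) ∈ Ioc (μ (n + 1)) (μ n) := by
      have := hμ (n + 1).lt_succ_self
      have := hgap (mem_Ici.2 (by omega : N ≤ n)) (mem_Ici.2 (by omega)) n.le_succ
      simp only [s, mem_Ioc]
      constructor <;> linarith
    rw [hμ.lam_range_eq_max hpos hμ0 (hgap.mono (Ici_subset_Ici.2 (by omega))) hsk]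
    simp [s]
  calc lowerPorosity (range μ)
      ≤ liminf ((fun h => lam (range μ) h / h) ∘ s) atTop :=
        hs.liminf_le_liminf_comp
          (isCoboundedUnder_ge_of_eventually_le _ ((hs.eventually hf).mono fun _ h => h.2))
          (isBoundedUnder_of_eventually_ge (hf.mono fun _ h => h.1))
    _ = _ := liminf_congr hlam

lemma liminf_le_lowerPorosity_range (hμ : StrictAnti μ) (hpos : ∀ n, 0 < μ n)
    (hμ0 : Tendsto μ atTop (𝓝 0)) {N : ℕ}
    (hgap : AntitoneOn (fun k => μ k - μ (k + 1)) (Ici N)) :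
    liminf (fun k => (μ k - μ (k + 1)) / (μ k + (μ k - μ (k + 1)))) atTop ≤
      lowerPorosity (range μ) := by
  have hd : ∀ k, 0 < μ k - μ (k + 1) := fun k => sub_pos.2 (hμ k.lt_succ_self)
  have hf := eventually_lam_div_mem_Icc (range μ)
  refine le_of_forall_lt_imp_le_of_dense fun c hc =>
    le_liminf_of_le (isCoboundedUnder_ge_of_eventually_le _ (hf.mono fun _ h => h.2)) ?_
  obtain ⟨M, hM⟩ := eventually_atTop.1 <| eventually_lt_of_lt_liminf hc <|
    isBoundedUnder_of ⟨0, fun k => div_nonneg (hd k).le (add_pos (hpos k) (hd k)).le⟩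
  filter_upwards [Ioo_mem_nhdsGT (hpos (max N M))] with h hh
  obtain ⟨n, hn, hnh⟩ := hμ.exists_mem_Ioc_of_tendsto_zero hμ0 hh.1 hh.2.le
  rw [hμ.lam_range_eq_max hpos hμ0 (hgap.mono (Ici_subset_Ici.2 (by omega))) hnh]
  exact (hM (n + 1) (by omega)).le.trans (div_add_le_max_sub_div (hpos _) (hd _) hnh.1)

theorem lowerPorosity_image_of_eventually_concave
    (μ : ℕ → ℝ) (hμanti : StrictAnti μ) (hμpos : ∀ n, 0 < μ n)
    (hμ0 : Tendsto μ atTop (nhds 0))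
    (hconc : ∀ᶠ n : ℕ in atTop, μ n ≤ (μ (n - 1) + μ (n + 1)) / 2) :
    lowerPorosity (Set.range μ) =
      lowerPorosityInf μ Set.univ / (1 + lowerPorosityInf μ Set.univ) := by
  obtain ⟨N, hgap⟩ := exists_antitoneOn_sub_succ_of_concave hconc
  have hd : ∀ k, 0 < μ k - μ (k + 1) := fun k => sub_pos.2 (hμanti k.lt_succ_self)
  have hx : ∀ k, (μ k - μ (k + 1)) / μ k ∈ Icc 0 1 := fun k =>
    ⟨div_nonneg (hd k).le (hμpos k).le, div_le_one_of_le₀ (by linarith [hμpos (k + 1)]) (hμpos k).le⟩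
  rw [le_antisymm (lowerPorosity_range_le_liminf hμanti hμpos hμ0 hgap)
      (liminf_le_lowerPorosity_range hμanti hμpos hμ0 hgap),
    lowerPorosityInf_univ_eq_liminf hgap,
    ← liminf_div_one_add (fun k => (hx k).1) (isBoundedUnder_of ⟨1, fun k => (hx k).2⟩)]
  congr 1
  funext k
  have := hμpos k
  field_simp
end
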